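/- Let (γ₁,γ₂) and (γ̄₁,γ̄₂) be admissible pairs of regular curves in S² admitting lifts, and suppose there exists g ∈ SU(2) with f_{γ̄₁,γ̄₂}(s₁,s₂) = g f_{γ₁,γ₂}(s₁,s₂) g⁻¹ for all (s₁,s₂) ∈ ℝ². Then there exists θ ∈ ℝ such that cos θ − κᵢ(s) sin θ > 0 for i = 1,2 and all s ∈ ℝ, and there exist rotations α₁, α₂ ∈ SO(3) with αᵢ(γᵢ^θ(s)) = γ̄ᵢ(s) for all s (where γᵢ^θ is the parallel curve of γᵢ). -/

import Mathlib

noncomputable section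

open Matrix

/-- Euclidean 3-space (as triples of reals). -/
abbrev R3 : Type := Fin 3 → ℝ

/-- The Euclidean inner product on ℝ³. -/
def dot3 (a b : R3) : ℝ := a 0 * b 0 + a 1 * b 1 + a 2 * b 2

/-- The Euclidean norm on ℝ³. -/
def norm3 (a : R3) : ℝ := Real.sqrt (dot3 a a)

/-- The cross product on ℝ³. -/
def cross3 (a b : R3) : R3 :=
  ![a 1 * b 2 - a 2 * b 1, a 2 * b 0 - a 0 * b 2, a 0 * b 1 - a 1 * b 0]

/-- The determinant of three vectors in ℝ³. -/
def det3 (a b c : R3) : ℝ := dot3 a (cross3 b c)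

/-- `γ : ℝ → ℝ³` is a regular curve in the unit sphere S²:
it is smooth, takes values in S², and has nowhere-vanishing derivative. -/
structure IsRegularCurve (γ : ℝ → R3) : Prop where
  smooth : ContDiff ℝ (⊤ : ℕ∞) γ
  sphere : ∀ s, dot3 (γ s) (γ s) = 1
  reg : ∀ s, deriv γ s ≠ 0

/-- The geodesic curvature `κ(s) = det(γ, γ', γ'')/|γ'|³` of a curve in S². -/
def kappa (γ : ℝ → R3) (s : ℝ) : ℝ :=
  det3 (γ s) (deriv γ s) (deriv (deriv γ) s) / norm3 (deriv γ s) ^ 3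

/-- The unit normal `n(s) = (γ × γ')/|γ'|` of a curve in S². -/
def unitNormal (γ : ℝ → R3) (s : ℝ) : R3 :=
  (norm3 (deriv γ s))⁻¹ • cross3 (γ s) (deriv γ s)

/-- `γ` is closed of period `l > 0`. -/
def HasPeriod (γ : ℝ → R3) (l : ℝ) : Prop := 0 < l ∧ ∀ s, γ (s + l) = γ s

/-- 2×2 complex matrices. -/
abbrev Mat2 := Matrix (Fin 2) (Fin 2) ℂ

def E1 : Mat2 := !![0, Complex.I; Complex.I, 0]
def E2 : Mat2 := !![0, -1; 1, 0]
def E3 : Mat2 := !![Complex.I, 0; 0, -Complex.I]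

/-- The identification of ℝ³ with su(2) via the orthonormal basis e₁, e₂, e₃. -/
def toSu2 (v : R3) : Mat2 := (v 0 : ℂ) • E1 + (v 1 : ℂ) • E2 + (v 2 : ℂ) • E3

/-- The adjoint action `Ad(a)x = a x a⁻¹`. -/
def AdM (a x : Mat2) : Mat2 := a * x * a⁻¹

/-- `c : ℝ → SU(2)` is a lift of the regular curve `γ` in S²:
it is smooth (entrywise), takes values in SU(2), and satisfies
`Ad(c(s))e₃ = γ(s)` and `Ad(c(s))e₁ = γ'(s)/|γ'(s)|` under `toSu2`. -/
structure IsLift (γ : ℝ → R3) (c : ℝ → Mat2) : Prop where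
  mem : ∀ s, c s ∈ Matrix.specialUnitaryGroup (Fin 2) ℂ
  smooth : ∀ i j, ContDiff ℝ (⊤ : ℕ∞) fun s => c s i j
  ad3 : ∀ s, AdM (c s) E3 = toSu2 (γ s)
  ad1 : ∀ s, AdM (c s) E1 = toSu2 ((norm3 (deriv γ s))⁻¹ • deriv γ s)

/-- The entrywise derivative of a matrix-valued curve. -/
def matDeriv (c : ℝ → Mat2) (s : ℝ) : Mat2 :=
  Matrix.of fun i j => deriv (fun t => c t i j) s

/-- The map `f_{γ₁,γ₂}(s₁,s₂) = c₁(0)⁻¹ c₁(s₁) c₂(s₂)⁻¹ c₂(0)` associated to lifts `c₁, c₂`. -/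
def fmap (c1 c2 : ℝ → Mat2) (s1 s2 : ℝ) : Mat2 :=
  (c1 0)⁻¹ * c1 s1 * (c2 s2)⁻¹ * c2 0

/-- `(γ₁, γ₂)` is an admissible pair. -/
structure IsAdmissiblePair (γ1 γ2 : ℝ → R3) : Prop where
  reg1 : IsRegularCurve γ1
  reg2 : IsRegularCurve γ2
  param1 : ∀ s, norm3 (deriv γ1 s) ^ 2 * (1 + kappa γ1 s ^ 2) = 4
  param2 : ∀ s, norm3 (deriv γ2 s) ^ 2 * (1 + kappa γ2 s ^ 2) = 4
  curv : ∀ s1 s2, kappa γ2 s2 < kappa γ1 s1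

/-- The restriction of `γ` to `[a,b]` is a shell. -/
def IsShell (γ : ℝ → R3) (a b : ℝ) : Prop :=
  a < b ∧ Set.InjOn γ (Set.Ico a b) ∧ γ a = γ b ∧
    LinearIndependent ℝ ![deriv γ a, deriv γ b]

/-- A positive shell: `det(γ(a), γ'(a), γ'(b)) < 0`. -/
def IsPositiveShell (γ : ℝ → R3) (a b : ℝ) : Prop :=
  IsShell γ a b ∧ det3 (γ a) (deriv γ a) (deriv γ b) < 0

/-- A negative shell: `det(γ(a), γ'(a), γ'(b)) > 0`. -/
def IsNegativeShell (γ : ℝ → R3) (a b : ℝ) : Prop :=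
  IsShell γ a b ∧ 0 < det3 (γ a) (deriv γ a) (deriv γ b)

/-- The unit sphere S² in ℝ³. -/
def sphere2 : Set R3 := {x | dot3 x x = 1}

/-- The μ-circle with center `o ∈ S²`. -/
def muCircle (μ : ℝ) (o : R3) : Set R3 :=
  {x | dot3 x x = 1 ∧ dot3 x o = μ / Real.sqrt (1 + μ ^ 2)}

/-- The (open) interior domain of the μ-circle with center `o ∈ S²`. -/
def muDisk (μ : ℝ) (o : R3) : Set R3 :=
  {x | dot3 x x = 1 ∧ μ / Real.sqrt (1 + μ ^ 2) < dot3 x o}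

def normalize3 (v : R3) : R3 := (norm3 v)⁻¹ • v

/-- `Δ` is the interior domain of the shell `γ|_{[a,b]}`: it is a connected component of the
complement of the image of the shell in S², and for each `s ∈ (a,b)` the points obtained by
pushing `γ(s)` slightly in the direction `σ • n(s)` (σ = 1 for a positive shell, σ = -1 for a
negative shell) belong to `Δ`. -/
def IsInteriorDomain (γ : ℝ → R3) (a b σ : ℝ) (Δ : Set R3) : Prop :=
  (∃ p ∈ sphere2 \ γ '' Set.Icc a b,
      Δ = connectedComponentIn (sphere2 \ γ '' Set.Icc a b) p) ∧
    ∀ s ∈ Set.Ioo a b, ∃ ε > 0, ∀ δ ∈ Set.Ioo (0 : ℝ) ε,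
      normalize3 (γ s + (σ * δ) • unitNormal γ s) ∈ Δ

/-- The center `o_t = (μ γ(t) + n(t))/√(1+μ²)` of the tangent μ-circle to `γ` at `γ(t)`
on the normal side. -/
def tangentCenter (μ : ℝ) (γ : ℝ → R3) (t : ℝ) : R3 :=
  (Real.sqrt (1 + μ ^ 2))⁻¹ • (μ • γ t + unitNormal γ t)

/-- The rotation of ℝ³ through angle `θ` about the oriented (unit) axis `o`. -/
def rot3 (o : R3) (θ : ℝ) (x : R3) : R3 :=
  Real.cos θ • x + Real.sin θ • cross3 o x + ((1 - Real.cos θ) * dot3 o x) • o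

/-- A closed regular curve of period `l` is generic: every self-intersection is a
transversal double point. -/
def IsGeneric (γ : ℝ → R3) (l : ℝ) : Prop :=
  ∀ s t : ℝ, γ s = γ t → (¬∃ k : ℤ, s - t = k * l) →
    LinearIndependent ℝ ![deriv γ s, deriv γ t] ∧
      ∀ u : ℝ, γ u = γ s → (∃ k : ℤ, u - s = k * l) ∨ (∃ k : ℤ, u - t = k * l)

/-- The number of crossings (self-intersection points) of a closed curve of period `l`. -/
def crossings (γ : ℝ → R3) (l : ℝ) : ℕ :=
  Set.ncard {p : R3 | ∃ s t : ℝ, γ s = p ∧ γ t = p ∧ ¬∃ k : ℤ, s - t = k * l}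

/-- The spherical (geodesic) distance on S³, identified with SU(2):
`dist(A,B) = arccos(Re trace(A Bᴴ)/2)`, which corresponds to the round distance on the
unit sphere S³ ⊂ ℝ⁴. -/
def distS3 (A B : Mat2) : ℝ := Real.arccos ((Matrix.trace (A * Bᴴ)).re / 2)

/-- The extrinsic diameter of the image of the map `f` associated to the lifts `c₁, c₂`. -/
def extDiam (c1 c2 : ℝ → Mat2) : ℝ :=
  sSup {d : ℝ | ∃ s1 s2 u1 u2 : ℝ, d = distS3 (fmap c1 c2 s1 s2) (fmap c1 c2 u1 u2)}

/-- The parallel curve `γ^θ = (cos θ) γ + (sin θ) n`. -/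
def parallelCurve (γ : ℝ → R3) (θ : ℝ) (s : ℝ) : R3 :=
  Real.cos θ • γ s + Real.sin θ • unitNormal γ s

/-- The arclength-type parameter `s(t) = (1/2)∫₀ᵗ |γ'(u)|√(1+κ(u)²) du`. -/
def arcParam (γ : ℝ → R3) (t : ℝ) : ℝ :=
  (1 / 2) * ∫ u in (0 : ℝ)..t, norm3 (deriv γ u) * Real.sqrt (1 + kappa γ u ^ 2)



-- entries of toSu2
lemma toSu2_apply (v : R3) : toSu2 v =
    !![(v 2 : ℂ) * Complex.I, (v 0 : ℂ) * Complex.I - v 1;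
       (v 0 : ℂ) * Complex.I + v 1, -((v 2 : ℂ) * Complex.I)] := by
  ext i j
  fin_cases i <;> fin_cases j <;>
    simp [toSu2, E1, E2, E3] <;> ring

def ip (A B : Mat2) : ℝ := -(1/2) * ((A * B).trace).re

lemma ip_toSu2 (u v : R3) : ip (toSu2 u) (toSu2 v) = dot3 u v := by
  rw [toSu2_apply, toSu2_apply]
  simp [ip, dot3, Matrix.trace_fin_two, Matrix.mul_apply, Fin.sum_univ_two]
  ring

lemma toSu2_inj {u v : R3} (h : toSu2 u = toSu2 v) : u = v := by
  rw [toSu2_apply, toSu2_apply] at h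
  have h10 := congrFun (congrFun h 1) 0
  have h00 := congrFun (congrFun h 0) 0
  simp [Complex.ext_iff] at h10 h00
  funext i
  fin_cases i <;> simp [h10.1, h10.2, h00]

lemma toSu2_bracket (u v : R3) :
    toSu2 (cross3 u v) = (1/2 : ℂ) • (toSu2 u * toSu2 v - toSu2 v * toSu2 u) := by
  rw [toSu2_apply, toSu2_apply, toSu2_apply]
  ext i j
  fin_cases i <;> fin_cases j <;>
    · simp [cross3, Matrix.mul_apply, Fin.sum_univ_two, Complex.ext_iff]
      constructor <;> ring

-- reconstruction of skew-hermitian traceless matrices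
def comp3 (M : Mat2) : R3 := ![(M 1 0).im, (M 1 0).re, (M 0 0).im]

lemma toSu2_comp3 {M : Mat2} (hH : Mᴴ = -M) (ht : M.trace = 0) :
    toSu2 (comp3 M) = M := by
  have h00 := congrFun (congrFun hH 0) 0
  have h01 := congrFun (congrFun hH 0) 1
  have h11 : M 1 1 = - M 0 0 := by
    have := ht; rw [Matrix.trace_fin_two] at this; linear_combination this
  simp [Matrix.conjTranspose_apply, Complex.ext_iff] at h00 h01
  rw [toSu2_apply]
  have e00 : ((comp3 M 2 : ℝ) : ℂ) * Complex.I = M 0 0 := by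
    simp [comp3, Complex.ext_iff]; linarith [h00]
  ext i j
  fin_cases i <;> fin_cases j
  · exact e00
  · simp [comp3, Complex.ext_iff]; constructor <;> linarith [h01.1, h01.2, h00]
  · simp [comp3, Complex.ext_iff]
  · show -(((comp3 M 2 : ℝ) : ℂ) * Complex.I) = M 1 1
    rw [e00, h11]

abbrev SU2 := Matrix.specialUnitaryGroup (Fin 2) ℂ

lemma su2_inv_eq {a : Mat2} (h : a ∈ SU2) : a⁻¹ = aᴴ := by
  rw [Matrix.mem_specialUnitaryGroup_iff, Matrix.mem_unitaryGroup_iff] at h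
  exact Matrix.inv_eq_right_inv h.1

lemma su2_mul_inv {a : Mat2} (h : a ∈ SU2) : a * a⁻¹ = 1 := by
  rw [su2_inv_eq h]
  rw [Matrix.mem_specialUnitaryGroup_iff, Matrix.mem_unitaryGroup_iff] at h
  exact h.1

lemma su2_inv_mul {a : Mat2} (h : a ∈ SU2) : a⁻¹ * a = 1 := by
  rw [su2_inv_eq h]
  have := Matrix.mem_unitaryGroup_iff'.mp (Matrix.mem_specialUnitaryGroup_iff.mp h).1
  exact this

lemma su2_inv_mem {a : Mat2} (h : a ∈ SU2) : a⁻¹ ∈ SU2 := by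
  have h' := Matrix.mem_specialUnitaryGroup_iff.mp h
  rw [Matrix.mem_specialUnitaryGroup_iff, Matrix.mem_unitaryGroup_iff]
  constructor
  · rw [su2_inv_eq h]
    simpa [Matrix.star_eq_conjTranspose] using Matrix.mem_unitaryGroup_iff'.mp h'.1
  · rw [Matrix.det_nonsing_inv, h'.2]; simp

lemma su2_mul_mem {a b : Mat2} (ha : a ∈ SU2) (hb : b ∈ SU2) : a * b ∈ SU2 :=
  Submonoid.mul_mem _ ha hb

lemma AdM_mul {a b : Mat2} (x : Mat2) : AdM (a * b) x = AdM a (AdM b x) := by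
  simp [AdM, Matrix.mul_inv_rev, Matrix.mul_assoc]

lemma AdM_trace {a : Mat2} (h : a ∈ SU2) (x : Mat2) : (AdM a x).trace = x.trace := by
  rw [AdM, Matrix.trace_mul_cycle, su2_inv_mul h, Matrix.one_mul]


lemma AdM_mul_AdM {a : Mat2} (h : a ∈ SU2) (x y : Mat2) :
    AdM a x * AdM a y = AdM a (x * y) := by
  unfold AdM
  rw [Matrix.mul_assoc (a * x) a⁻¹, ← Matrix.mul_assoc a⁻¹ (a * y) a⁻¹,
    ← Matrix.mul_assoc a⁻¹ a y, su2_inv_mul h, Matrix.one_mul]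
  simp [Matrix.mul_assoc]

lemma ip_AdM {a : Mat2} (h : a ∈ SU2) (x y : Mat2) :
    ip (AdM a x) (AdM a y) = ip x y := by
  rw [ip, AdM_mul_AdM h, AdM_trace h, ip]

lemma AdM_conjTranspose {a : Mat2} (h : a ∈ SU2) {x : Mat2} (hx : xᴴ = -x) :
    (AdM a x)ᴴ = -(AdM a x) := by
  rw [AdM, su2_inv_eq h]
  simp [Matrix.conjTranspose_mul, hx, Matrix.mul_assoc, Matrix.neg_mul, Matrix.mul_neg]

lemma AdM_add (a x y : Mat2) : AdM a (x + y) = AdM a x + AdM a y := by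
  simp [AdM, Matrix.add_mul, Matrix.mul_add]

lemma AdM_smul (a : Mat2) (c : ℂ) (x : Mat2) : AdM a (c • x) = c • AdM a x := by
  simp [AdM, Matrix.smul_mul, Matrix.mul_smul]

lemma E1_skew : E1ᴴ = -E1 := by
  ext i j; fin_cases i <;> fin_cases j <;> simp [E1, Complex.ext_iff]
lemma E2_skew : E2ᴴ = -E2 := by
  ext i j; fin_cases i <;> fin_cases j <;> simp [E2, Complex.ext_iff]
lemma E3_skew : E3ᴴ = -E3 := by
  ext i j; fin_cases i <;> fin_cases j <;> simp [E3, Complex.ext_iff]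
lemma E1_trace : E1.trace = 0 := by simp [E1, Matrix.trace_fin_two]
lemma E2_trace : E2.trace = 0 := by simp [E2, Matrix.trace_fin_two]
lemma E3_trace : E3.trace = 0 := by simp [E3, Matrix.trace_fin_two]

lemma toSu2_skew (v : R3) : (toSu2 v)ᴴ = -(toSu2 v) := by
  rw [toSu2_apply]
  ext i j; fin_cases i <;> fin_cases j <;> simp [Complex.ext_iff]

lemma toSu2_trace (v : R3) : (toSu2 v).trace = 0 := by
  rw [toSu2_apply]; simp [Matrix.trace_fin_two]

def bas3 : Fin 3 → R3 := fun j k => if k = j then 1 else 0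

lemma toSu2_bas0 : toSu2 (bas3 0) = E1 := by simp [toSu2, bas3]
lemma toSu2_bas1 : toSu2 (bas3 1) = E2 := by simp [toSu2, bas3]
lemma toSu2_bas2 : toSu2 (bas3 2) = E3 := by simp [toSu2, bas3]
lemma bas3_apply (j k : Fin 3) : bas3 j k = if k = j then 1 else 0 := rfl

lemma toSu2_add (u v : R3) : toSu2 (u + v) = toSu2 u + toSu2 v := by
  ext i j
  fin_cases i <;> fin_cases j <;> (simp [toSu2, E1, E2, E3]; push_cast; ring)

lemma toSu2_smul (r : ℝ) (v : R3) : toSu2 (r • v) = (r : ℂ) • toSu2 v := by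
  ext i j
  fin_cases i <;> fin_cases j <;> (simp [toSu2, E1, E2, E3]; push_cast; ring)

lemma toSu2_decomp (u : R3) :
    toSu2 u = ((u 0 : ℂ)) • toSu2 (bas3 0) + ((u 1 : ℂ)) • toSu2 (bas3 1)
      + ((u 2 : ℂ)) • toSu2 (bas3 2) := by
  rw [toSu2_bas0, toSu2_bas1, toSu2_bas2]; rfl

lemma AdM_sub (a x y : Mat2) : AdM a (x - y) = AdM a x - AdM a y := by
  simp [AdM, Matrix.sub_mul, Matrix.mul_sub]

def so3Of (D : Mat2) : Matrix (Fin 3) (Fin 3) ℝ :=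
  Matrix.of fun i j => comp3 (AdM D (toSu2 (bas3 j))) i

lemma so3Of_col {D : Mat2} (hD : D ∈ SU2) (j : Fin 3) :
    toSu2 (fun i => so3Of D i j) = AdM D (toSu2 (bas3 j)) := by
  have : (fun i => so3Of D i j) = comp3 (AdM D (toSu2 (bas3 j))) := by
    funext i; rfl
  rw [this]
  exact toSu2_comp3 (AdM_conjTranspose hD (toSu2_skew _))
    (by rw [AdM_trace hD, toSu2_trace])

lemma so3Of_mulVec {D : Mat2} (hD : D ∈ SU2) (u : R3) :
    toSu2 ((so3Of D).mulVec u) = AdM D (toSu2 u) := by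
  have hdec : (so3Of D).mulVec u =
      u 0 • (fun i => so3Of D i 0) + u 1 • (fun i => so3Of D i 1)
        + u 2 • (fun i => so3Of D i 2) := by
    funext i
    simp [Matrix.mulVec, dotProduct, Fin.sum_univ_three]
    ring
  rw [hdec, toSu2_add, toSu2_add, toSu2_smul, toSu2_smul, toSu2_smul,
    so3Of_col hD, so3Of_col hD, so3Of_col hD, toSu2_decomp u,
    AdM_add, AdM_add, AdM_smul, AdM_smul, AdM_smul]

lemma so3Of_dot {D : Mat2} (hD : D ∈ SU2) (u v : R3) :
    dot3 ((so3Of D).mulVec u) ((so3Of D).mulVec v) = dot3 u v := by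
  rw [← ip_toSu2, so3Of_mulVec hD, so3Of_mulVec hD, ip_AdM hD, ip_toSu2]

lemma so3Of_cross {D : Mat2} (hD : D ∈ SU2) (u v : R3) :
    cross3 ((so3Of D).mulVec u) ((so3Of D).mulVec v) = (so3Of D).mulVec (cross3 u v) := by
  apply toSu2_inj
  rw [toSu2_bracket, so3Of_mulVec hD, so3Of_mulVec hD, so3Of_mulVec hD,
    AdM_mul_AdM hD, AdM_mul_AdM hD, ← AdM_sub, ← AdM_smul, ← toSu2_bracket]

lemma so3Of_orth {D : Mat2} (hD : D ∈ SU2) : (so3Of D)ᵀ * so3Of D = 1 := by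
  ext i j
  have h1 : ((so3Of D)ᵀ * so3Of D) i j
      = dot3 ((so3Of D).mulVec (bas3 i)) ((so3Of D).mulVec (bas3 j)) := by
    simp [Matrix.mul_apply, dot3, Matrix.mulVec, dotProduct,
      Fin.sum_univ_three, Matrix.transpose_apply]
    fin_cases i <;> fin_cases j <;> simp [bas3] <;> ring
  rw [h1, so3Of_dot hD]
  fin_cases i <;> fin_cases j <;> simp [bas3, dot3, Matrix.one_apply]

lemma so3Of_det {D : Mat2} (hD : D ∈ SU2) : (so3Of D).det = 1 := by
  have h1 : (so3Of D).det
      = dot3 ((so3Of D).mulVec (bas3 0))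
          (cross3 ((so3Of D).mulVec (bas3 1)) ((so3Of D).mulVec (bas3 2))) := by
    rw [Matrix.det_fin_three]
    simp [dot3, cross3, Matrix.mulVec, dotProduct, Fin.sum_univ_three, bas3]
    ring
  rw [h1, so3Of_cross hD]
  have h2 : cross3 (bas3 1) (bas3 2) = bas3 0 := by
    funext i; fin_cases i <;> simp [cross3, bas3]
  rw [h2, so3Of_dot hD]
  simp [bas3, dot3]

def uT (γ : ℝ → R3) (s : ℝ) : R3 := (norm3 (deriv γ s))⁻¹ • deriv γ s

-- algebraic identities
lemma dot3_comm (a b : R3) : dot3 a b = dot3 b a := by simp [dot3]; ring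
lemma dot3_smul_right (r : ℝ) (a b : R3) : dot3 a (r • b) = r * dot3 a b := by
  simp [dot3]; ring
lemma dot3_smul_left (r : ℝ) (a b : R3) : dot3 (r • a) b = r * dot3 a b := by
  simp [dot3]; ring
lemma dot3_add_right (a b c : R3) : dot3 a (b + c) = dot3 a b + dot3 a c := by
  simp [dot3]; ring
lemma dot3_add_left (a b c : R3) : dot3 (a + b) c = dot3 a c + dot3 b c := by
  simp [dot3]; ring
lemma cross3_smul_right (r : ℝ) (a b : R3) : cross3 a (r • b) = r • cross3 a b := by
  funext i; fin_cases i <;> (simp [cross3]; ring)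
lemma cross3_smul_left (r : ℝ) (a b : R3) : cross3 (r • a) b = r • cross3 a b := by
  funext i; fin_cases i <;> (simp [cross3]; ring)
lemma cross3_add_right (a b c : R3) : cross3 a (b + c) = cross3 a b + cross3 a c := by
  funext i; fin_cases i <;> (simp [cross3]; ring)
lemma dot3_cross_left (a b c : R3) : dot3 (cross3 a b) c = det3 a b c := by
  simp [det3, dot3, cross3]; ring
lemma dot3_cross_self (a b : R3) : dot3 (cross3 a b) a = 0 := by
  simp [dot3, cross3]; ring
lemma dot3_cross_self' (a b : R3) : dot3 (cross3 a b) b = 0 := by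
  simp [dot3, cross3]; ring
lemma cross3_norm (a b : R3) :
    dot3 (cross3 a b) (cross3 a b) = dot3 a a * dot3 b b - dot3 a b ^ 2 := by
  simp [dot3, cross3]; ring
lemma cross3_cross (a b c : R3) :
    cross3 (cross3 a b) c = dot3 a c • b - dot3 b c • a := by
  funext i; fin_cases i <;> (simp [cross3, dot3]; ring)

lemma dot3_pos {w : R3} (hw : w ≠ 0) : 0 < dot3 w w := by
  rcases lt_or_eq_of_le (by positivity : (0:ℝ) ≤ (w 0)^2 + (w 1)^2 + (w 2)^2) with h | h
  · simpa [dot3] using by nlinarith [h]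
  · exfalso; apply hw
    funext i
    have h0 : (w 0)^2 = 0 ∧ (w 1)^2 = 0 ∧ (w 2)^2 = 0 := by
      constructor; nlinarith [sq_nonneg (w 0), sq_nonneg (w 1), sq_nonneg (w 2)]
      constructor <;> nlinarith [sq_nonneg (w 0), sq_nonneg (w 1), sq_nonneg (w 2)]
    fin_cases i <;>
      simp [pow_eq_zero_iff] at h0 ⊢ <;> tauto

lemma hasDerivAt_dot3 {f g : ℝ → R3} {f' g' : R3} {s : ℝ}
    (hf : HasDerivAt f f' s) (hg : HasDerivAt g g' s) :
    HasDerivAt (fun t => dot3 (f t) (g t)) (dot3 f' (g s) + dot3 (f s) g') s := by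
  have Hf := fun i => hasDerivAt_pi.1 hf i
  have Hg := fun i => hasDerivAt_pi.1 hg i
  have := (((Hf 0).mul (Hg 0)).add ((Hf 1).mul (Hg 1))).add ((Hf 2).mul (Hg 2))
  convert this using 1
  · rfl
  · rfl
  · rfl
  · simp [dot3]; ring

lemma hasDerivAt_cross3 {f g : ℝ → R3} {f' g' : R3} {s : ℝ}
    (hf : HasDerivAt f f' s) (hg : HasDerivAt g g' s) :
    HasDerivAt (fun t => cross3 (f t) (g t)) (cross3 f' (g s) + cross3 (f s) g') s := by
  have Hf := fun i => hasDerivAt_pi.1 hf i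
  have Hg := fun i => hasDerivAt_pi.1 hg i
  rw [hasDerivAt_pi]
  intro i
  fin_cases i
  · convert ((Hf 1).mul (Hg 2)).sub ((Hf 2).mul (Hg 1)) using 1
    · rfl
    · simp [cross3]; ring
  · convert ((Hf 2).mul (Hg 0)).sub ((Hf 0).mul (Hg 2)) using 1
    · rfl
    · simp [cross3]; ring
  · convert ((Hf 0).mul (Hg 1)).sub ((Hf 1).mul (Hg 0)) using 1
    · rfl
    · simp [cross3]; ring

lemma rc_const_dot {f g : ℝ → R3} {c : ℝ}
    (hf : ∀ t, HasDerivAt f (deriv f t) t) (hg : ∀ t, HasDerivAt g (deriv g t) t)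
    (hc : ∀ t, dot3 (f t) (g t) = c) (s : ℝ) :
    dot3 (deriv f s) (g s) + dot3 (f s) (deriv g s) = 0 := by
  have hd := hasDerivAt_dot3 (hf s) (hg s)
  have hzero : HasDerivAt (fun t => dot3 (f t) (g t)) 0 s := by
    have : (fun t => dot3 (f t) (g t)) = fun _ => c := funext hc
    rw [this]; exact hasDerivAt_const s c
  have := hzero.unique hd
  linarith


section Curve
variable {γ : ℝ → R3} (h : IsRegularCurve γ)
include h

lemma rc_hasDerivAt (s : ℝ) : HasDerivAt γ (deriv γ s) s :=
  ((h.smooth.differentiable (by simp)) s).hasDerivAt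

lemma rc_deriv_contDiff : ContDiff ℝ (⊤ : ℕ∞) (deriv γ) :=
  (contDiff_infty_iff_deriv.mp (h.smooth.of_le (by simp))).2

lemma rc_hasDerivAt2 (s : ℝ) : HasDerivAt (deriv γ) (deriv (deriv γ) s) s :=
  (((rc_deriv_contDiff h).differentiable (by simp)) s).hasDerivAt

lemma rc_dot_pos (s : ℝ) : 0 < dot3 (deriv γ s) (deriv γ s) := dot3_pos (h.reg s)

lemma rc_v_pos (s : ℝ) : 0 < norm3 (deriv γ s) := Real.sqrt_pos.2 (rc_dot_pos h s)

lemma rc_v_sq (s : ℝ) : norm3 (deriv γ s) ^ 2 = dot3 (deriv γ s) (deriv γ s) :=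
  Real.sq_sqrt (rc_dot_pos h s).le

lemma rc_hasDerivAt_v (s : ℝ) :
    HasDerivAt (fun t => norm3 (deriv γ t))
      (dot3 (deriv γ s) (deriv (deriv γ) s) / norm3 (deriv γ s)) s := by
  have hd := hasDerivAt_dot3 (rc_hasDerivAt2 h s) (rc_hasDerivAt2 h s)
  have := hd.sqrt (ne_of_gt (rc_dot_pos h s))
  convert this using 1
  · rfl
  have hs : Real.sqrt (dot3 (deriv γ s) (deriv γ s)) ≠ 0 := by
    have := rc_v_pos h s; unfold norm3 at this; exact ne_of_gt this
  unfold norm3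
  rw [dot3_comm (deriv (deriv γ) s) (deriv γ s)]
  field_simp
  ring

lemma rc_hasDerivAt_uT (s : ℝ) : HasDerivAt (uT γ) (deriv (uT γ) s) s := by
  have : HasDerivAt (fun t => (norm3 (deriv γ t))⁻¹ • deriv γ t) _ s :=
    ((rc_hasDerivAt_v h s).inv (ne_of_gt (rc_v_pos h s))).smul (rc_hasDerivAt2 h s)
  exact (this.differentiableAt.hasDerivAt :)

lemma rc_hasDerivAt_n (s : ℝ) : HasDerivAt (unitNormal γ) (deriv (unitNormal γ) s) s := by
  have : HasDerivAt (fun t => (norm3 (deriv γ t))⁻¹ • cross3 (γ t) (deriv γ t)) _ s :=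
    ((rc_hasDerivAt_v h s).inv (ne_of_gt (rc_v_pos h s))).smul
      (hasDerivAt_cross3 (rc_hasDerivAt h s) (rc_hasDerivAt2 h s))
  exact (this.differentiableAt.hasDerivAt :)

-- F1
lemma rc_dot_g_g' (s : ℝ) : dot3 (γ s) (deriv γ s) = 0 := by
  have hd := hasDerivAt_dot3 (rc_hasDerivAt h s) (rc_hasDerivAt h s)
  have hc : HasDerivAt (fun t => dot3 (γ t) (γ t)) 0 s := by
    have : (fun t => dot3 (γ t) (γ t)) = fun _ => (1:ℝ) := funext h.sphere
    rw [this]; exact hasDerivAt_const s 1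
  have := hc.unique hd
  rw [dot3_comm (deriv γ s)] at this
  linarith

lemma rc_dot_uT_g (s : ℝ) : dot3 (uT γ s) (γ s) = 0 := by
  rw [uT, dot3_smul_left, dot3_comm, rc_dot_g_g' h, mul_zero]

lemma rc_dot_uT_uT (s : ℝ) : dot3 (uT γ s) (uT γ s) = 1 := by
  rw [uT, dot3_smul_left, dot3_smul_right, ← rc_v_sq h]
  field_simp [ne_of_gt (rc_v_pos h s)]

lemma rc_dot_uT_g' (s : ℝ) : dot3 (uT γ s) (deriv γ s) = norm3 (deriv γ s) := by
  rw [uT, dot3_smul_left, ← rc_v_sq h]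
  field_simp [ne_of_gt (rc_v_pos h s)]

lemma rc_n_eq (s : ℝ) : unitNormal γ s = cross3 (γ s) (uT γ s) := by
  rw [unitNormal, uT, cross3_smul_right]

lemma rc_dot_n_g (s : ℝ) : dot3 (unitNormal γ s) (γ s) = 0 := by
  rw [unitNormal, dot3_smul_left, dot3_cross_self, mul_zero]

lemma rc_dot_n_g' (s : ℝ) : dot3 (unitNormal γ s) (deriv γ s) = 0 := by
  rw [unitNormal, dot3_smul_left, dot3_cross_self', mul_zero]

lemma rc_dot_n_uT (s : ℝ) : dot3 (unitNormal γ s) (uT γ s) = 0 := by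
  rw [uT, dot3_smul_right, rc_dot_n_g' h, mul_zero]

lemma rc_dot_n_n (s : ℝ) : dot3 (unitNormal γ s) (unitNormal γ s) = 1 := by
  rw [unitNormal, dot3_smul_left, dot3_smul_right, cross3_norm, h.sphere,
    rc_dot_g_g' h, ← rc_v_sq h]
  field_simp [ne_of_gt (rc_v_pos h s)]
  ring

lemma rc_det_eq (s : ℝ) :
    det3 (γ s) (deriv γ s) (deriv (deriv γ) s) = kappa γ s * norm3 (deriv γ s) ^ 3 := by
  rw [kappa]
  field_simp [ne_of_gt (rc_v_pos h s)]

lemma rc_dot_n_g'' (s : ℝ) :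
    dot3 (unitNormal γ s) (deriv (deriv γ) s) = kappa γ s * norm3 (deriv γ s) ^ 2 := by
  rw [unitNormal, dot3_smul_left, dot3_cross_left, rc_det_eq h]
  field_simp [ne_of_gt (rc_v_pos h s)]

-- derivative dot relations
lemma rc_dot_duT_g (s : ℝ) :
    dot3 (deriv (uT γ) s) (γ s) = -norm3 (deriv γ s) := by
  have := rc_const_dot (fun t => rc_hasDerivAt_uT h t) (fun t => rc_hasDerivAt h t)
    (rc_dot_uT_g h) s
  have h2 : dot3 (uT γ s) (deriv γ s) = norm3 (deriv γ s) := rc_dot_uT_g' h s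
  linarith

lemma rc_dot_duT_uT (s : ℝ) : dot3 (deriv (uT γ) s) (uT γ s) = 0 := by
  have := rc_const_dot (fun t => rc_hasDerivAt_uT h t) (fun t => rc_hasDerivAt_uT h t)
    (rc_dot_uT_uT h) s
  rw [dot3_comm (uT γ s)] at this
  linarith

lemma rc_dot_dn_g (s : ℝ) : dot3 (deriv (unitNormal γ) s) (γ s) = 0 := by
  have := rc_const_dot (fun t => rc_hasDerivAt_n h t) (fun t => rc_hasDerivAt h t)
    (rc_dot_n_g h) s
  have h2 : dot3 (unitNormal γ s) (deriv γ s) = 0 := rc_dot_n_g' h s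
  linarith

lemma rc_dot_dn_n (s : ℝ) : dot3 (deriv (unitNormal γ) s) (unitNormal γ s) = 0 := by
  have := rc_const_dot (fun t => rc_hasDerivAt_n h t) (fun t => rc_hasDerivAt_n h t)
    (rc_dot_n_n h) s
  rw [dot3_comm (unitNormal γ s)] at this
  linarith

lemma rc_dot_dn_g' (s : ℝ) :
    dot3 (deriv (unitNormal γ) s) (deriv γ s) = -(kappa γ s * norm3 (deriv γ s) ^ 2) := by
  have := rc_const_dot (fun t => rc_hasDerivAt_n h t) (fun t => rc_hasDerivAt2 h t)
    (rc_dot_n_g' h) s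
  have h2 := rc_dot_n_g'' h s
  linarith

lemma rc_dot_dn_uT (s : ℝ) :
    dot3 (deriv (unitNormal γ) s) (uT γ s) = -(kappa γ s * norm3 (deriv γ s)) := by
  rw [uT, dot3_smul_right, rc_dot_dn_g' h]
  have := rc_v_pos h s
  field_simp

lemma rc_dot_duT_n (s : ℝ) :
    dot3 (deriv (uT γ) s) (unitNormal γ s) = kappa γ s * norm3 (deriv γ s) := by
  have hconst : ∀ t, dot3 (uT γ t) (unitNormal γ t) = 0 := fun t => by
    rw [dot3_comm]; exact rc_dot_n_uT h t
  have := rc_const_dot (fun t => rc_hasDerivAt_uT h t) (fun t => rc_hasDerivAt_n h t)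
    hconst s
  have h2 : dot3 (uT γ s) (deriv (unitNormal γ) s) = -(kappa γ s * norm3 (deriv γ s)) := by
    rw [dot3_comm]; exact rc_dot_dn_uT h s
  linarith

end Curve

lemma cross3_add_left (a b c : R3) : cross3 (a + b) c = cross3 a c + cross3 b c := by
  funext i; fin_cases i <;> (simp [cross3]; ring)

lemma hasDerivAt_mulVec (A : Matrix (Fin 3) (Fin 3) ℝ) {f : ℝ → R3} {f' : R3} {s : ℝ}
    (hf : HasDerivAt f f' s) :
    HasDerivAt (fun t => A.mulVec (f t)) (A.mulVec f') s := by
  have Hf := fun i => hasDerivAt_pi.1 hf i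
  rw [hasDerivAt_pi]
  intro i
  have := (((Hf 0).const_mul (A i 0)).add ((Hf 1).const_mul (A i 1))).add
    ((Hf 2).const_mul (A i 2))
  convert this using 1
  · funext t; simp [Matrix.mulVec, dotProduct, Fin.sum_univ_three]
  · simp [Matrix.mulVec, dotProduct, Fin.sum_univ_three]

lemma mulVec_add3 (A : Matrix (Fin 3) (Fin 3) ℝ) (u v : R3) :
    A.mulVec (u + v) = A.mulVec u + A.mulVec v := by
  funext i; simp [Matrix.mulVec, dotProduct, Fin.sum_univ_three]; ring

lemma mulVec_smul3 (A : Matrix (Fin 3) (Fin 3) ℝ) (r : ℝ) (u : R3) :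
    A.mulVec (r • u) = r • A.mulVec u := by
  funext i; simp [Matrix.mulVec, dotProduct, Fin.sum_univ_three]; ring

lemma so3Of_inj {D : Mat2} (hD : D ∈ SU2) {u v : R3}
    (huv : (so3Of D).mulVec u = (so3Of D).mulVec v) : u = v := by
  by_contra hne
  have hz : u - v ≠ 0 := sub_ne_zero.2 hne
  have h1 : (so3Of D).mulVec (u - v) = 0 := by
    have : u - v = u + (-1 : ℝ) • v := by funext i; simp; ring
    rw [this, mulVec_add3, mulVec_smul3, huv]
    funext i; simp
  have := so3Of_dot hD (u - v) (u - v)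
  rw [h1] at this
  have hpos := dot3_pos hz
  rw [← this] at hpos
  simp [dot3] at hpos

section LiftFrame
variable {γ : ℝ → R3} {c : ℝ → Mat2}

lemma lift_ad2 (h : IsRegularCurve γ) (hc : IsLift γ c) (s : ℝ) :
    AdM (c s) E2 = toSu2 (unitNormal γ s) := by
  have hb : cross3 (bas3 2) (bas3 0) = bas3 1 := by
    funext i; fin_cases i <;> simp [cross3, bas3]
  have hE2 : E2 = (1/2 : ℂ) • (E3 * E1 - E1 * E3) := by
    rw [← toSu2_bas1, ← hb, toSu2_bracket, toSu2_bas2, toSu2_bas0]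
  rw [hE2, AdM_smul, AdM_sub, ← AdM_mul_AdM (hc.mem s), ← AdM_mul_AdM (hc.mem s),
    hc.ad3, hc.ad1]
  have : (norm3 (deriv γ s))⁻¹ • deriv γ s = uT γ s := rfl
  rw [this, ← toSu2_bracket, ← rc_n_eq h]

lemma lift_frame (h : IsRegularCurve γ) (hc : IsLift γ c) (u : R3) (s : ℝ) :
    AdM (c s) (toSu2 u) =
      toSu2 (u 0 • uT γ s + u 1 • unitNormal γ s + u 2 • γ s) := by
  rw [toSu2_decomp u, AdM_add, AdM_add, AdM_smul, AdM_smul, AdM_smul,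
    toSu2_bas0, toSu2_bas1, toSu2_bas2, hc.ad1, lift_ad2 h hc, hc.ad3]
  have : (norm3 (deriv γ s))⁻¹ • deriv γ s = uT γ s := rfl
  rw [this, toSu2_add, toSu2_add, toSu2_smul, toSu2_smul, toSu2_smul]

end LiftFrame

lemma key_eqs {γ γb : ℝ → R3} {c d : ℝ → Mat2} {D gi : Mat2}
    (h : IsRegularCurve γ) (hb : IsRegularCurve γb)
    (hc : IsLift γ c) (hd : IsLift γb d)
    (hD : D ∈ SU2) (hgi : gi ∈ SU2)
    (hds : ∀ s, d s = D * c s * gi)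
    (x w : R3) (hx : toSu2 x = AdM gi E3) (hw : toSu2 w = AdM gi E1) (s : ℝ) :
    γb s = (so3Of D).mulVec (x 0 • uT γ s + x 1 • unitNormal γ s + x 2 • γ s) ∧
    uT γb s = (so3Of D).mulVec (w 0 • uT γ s + w 1 • unitNormal γ s + w 2 • γ s) ∧
    norm3 (deriv γb s) * w 2 = -(x 0) * norm3 (deriv γ s) ∧
    norm3 (deriv γb s) * w 1 = x 0 * (kappa γ s * norm3 (deriv γ s)) ∧
    norm3 (deriv γb s) * w 0 = norm3 (deriv γ s) * (x 2 - kappa γ s * x 1) := by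
  have hAd : ∀ t (M : Mat2), AdM (d t) M = AdM D (AdM (c t) (AdM gi M)) := by
    intro t M
    rw [hds t, AdM_mul, AdM_mul]
  have hrep : ∀ t, γb t =
      (so3Of D).mulVec (x 0 • uT γ t + x 1 • unitNormal γ t + x 2 • γ t) := by
    intro t
    apply toSu2_inj
    rw [← hd.ad3 t, hAd t, ← hx, lift_frame h hc x t, so3Of_mulVec hD,
      ← lift_frame h hc x t]
  have hTrep : ∀ t, uT γb t =
      (so3Of D).mulVec (w 0 • uT γ t + w 1 • unitNormal γ t + w 2 • γ t) := by
    intro t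
    apply toSu2_inj
    have h1 : toSu2 (uT γb t) = AdM (d t) E1 := (hd.ad1 t).symm
    rw [h1, hAd t, ← hw, lift_frame h hc w t, so3Of_mulVec hD,
      ← lift_frame h hc w t]
  refine ⟨hrep s, hTrep s, ?_⟩
  -- derivative of γb
  have hP : HasDerivAt
      (fun t => x 0 • uT γ t + x 1 • unitNormal γ t + x 2 • γ t)
      (x 0 • deriv (uT γ) s + x 1 • deriv (unitNormal γ) s + x 2 • deriv γ s) s :=
    (((rc_hasDerivAt_uT h s).const_smul (x 0)).add
      ((rc_hasDerivAt_n h s).const_smul (x 1))).add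
      ((rc_hasDerivAt h s).const_smul (x 2))
  have hγb_eq : γb = fun t =>
      (so3Of D).mulVec (x 0 • uT γ t + x 1 • unitNormal γ t + x 2 • γ t) :=
    funext hrep
  have hder : HasDerivAt γb ((so3Of D).mulVec
      (x 0 • deriv (uT γ) s + x 1 • deriv (unitNormal γ) s + x 2 • deriv γ s)) s := by
    rw [hγb_eq]; exact hasDerivAt_mulVec _ hP
  have hNpos := rc_v_pos hb s
  have hderiv2 : deriv γb s = (so3Of D).mulVec
      (norm3 (deriv γb s) • (w 0 • uT γ s + w 1 • unitNormal γ s + w 2 • γ s)) := by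
    have h1 : norm3 (deriv γb s) • uT γb s = deriv γb s := by
      rw [uT, smul_smul, mul_inv_cancel₀ (ne_of_gt hNpos), one_smul]
    calc deriv γb s = norm3 (deriv γb s) • uT γb s := h1.symm
      _ = norm3 (deriv γb s) •
          ((so3Of D).mulVec (w 0 • uT γ s + w 1 • unitNormal γ s + w 2 • γ s)) := by
            rw [hTrep s]
      _ = _ := (mulVec_smul3 _ _ _).symm
  have hE : x 0 • deriv (uT γ) s + x 1 • deriv (unitNormal γ) s + x 2 • deriv γ s
      = norm3 (deriv γb s) • (w 0 • uT γ s + w 1 • unitNormal γ s + w 2 • γ s) := by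
    exact so3Of_inj hD (hder.deriv.symm.trans hderiv2)
  -- take dot products
  have dotA := congrArg (fun r => dot3 r (γ s)) hE
  have dotB := congrArg (fun r => dot3 r (unitNormal γ s)) hE
  have dotC := congrArg (fun r => dot3 r (uT γ s)) hE
  simp only [dot3_add_left, dot3_smul_left] at dotA dotB dotC
  rw [rc_dot_duT_g h, rc_dot_dn_g h, dot3_comm (deriv γ s) (γ s), rc_dot_g_g' h,
    rc_dot_uT_g h, rc_dot_n_g h, h.sphere s] at dotA
  rw [rc_dot_duT_n h, rc_dot_dn_n h, dot3_comm (deriv γ s) (unitNormal γ s),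
    rc_dot_n_g' h, dot3_comm (uT γ s) (unitNormal γ s), rc_dot_n_uT h,
    rc_dot_n_n h, dot3_comm (γ s) (unitNormal γ s), rc_dot_n_g h] at dotB
  rw [rc_dot_duT_uT h, rc_dot_dn_uT h, dot3_comm (deriv γ s) (uT γ s),
    rc_dot_uT_g' h, rc_dot_uT_uT h, rc_dot_n_uT h,
    dot3_comm (γ s) (uT γ s), rc_dot_uT_g h] at dotC
  refine ⟨by linarith [dotA], by linarith [dotB], by linarith [dotC]⟩

lemma cross3_neg_right (a b : R3) : cross3 a (-b) = -cross3 a b := by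
  funext i; fin_cases i <;> (simp [cross3]; ring)

lemma dot3_neg_neg (a b : R3) : dot3 (-a) (-b) = dot3 a b := by
  simp [dot3]

lemma neg_case_kappa {γ γb : ℝ → R3} {D : Mat2} {x : R3}
    (h : IsRegularCurve γ) (hb : IsRegularCurve γb) (hD : D ∈ SU2)
    (hxr : ∀ s, γb s = (so3Of D).mulVec (x 1 • unitNormal γ s + x 2 • γ s))
    (hTr : ∀ s, uT γb s = -((so3Of D).mulVec (uT γ s))) (s : ℝ) :
    kappa γb s * norm3 (deriv γb s)
      = norm3 (deriv γ s) * (x 1 + kappa γ s * x 2) := by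
  have hTfun : uT γb = fun t => -((so3Of D).mulVec (uT γ t)) := funext hTr
  have hduT : deriv (uT γb) s = -((so3Of D).mulVec (deriv (uT γ) s)) := by
    have hd : HasDerivAt (uT γb) (-((so3Of D).mulVec (deriv (uT γ) s))) s := by
      rw [hTfun]
      exact (hasDerivAt_mulVec _ (rc_hasDerivAt_uT h s)).neg
    exact hd.deriv
  have hnT : cross3 (unitNormal γ s) (uT γ s) = -(γ s) := by
    rw [rc_n_eq h, cross3_cross, dot3_comm (γ s) (uT γ s), rc_dot_uT_g h,
      rc_dot_uT_uT h]
    funext i; simp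
  have hnb : unitNormal γb s
      = -((so3Of D).mulVec (x 1 • (-(γ s)) + x 2 • unitNormal γ s)) := by
    rw [rc_n_eq hb, hxr s, hTr s, cross3_neg_right, so3Of_cross hD,
      cross3_add_left, cross3_smul_left, cross3_smul_left, hnT, ← rc_n_eq h]
  have hk := rc_dot_duT_n hb s
  rw [hduT, hnb, dot3_neg_neg, so3Of_dot hD] at hk
  rw [← hk, dot3_add_right, dot3_smul_right, dot3_smul_right]
  have e1 : dot3 (deriv (uT γ) s) (-(γ s)) = norm3 (deriv γ s) := by
    have : dot3 (deriv (uT γ) s) (-(γ s)) = -(dot3 (deriv (uT γ) s) (γ s)) := by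
      simp [dot3]; ring
    rw [this, rc_dot_duT_g h]; ring
  rw [e1, rc_dot_duT_n h]
  ring

lemma exists_cos_sin {a b : ℝ} (h : a ^ 2 + b ^ 2 = 1) :
    ∃ θ : ℝ, Real.cos θ = a ∧ Real.sin θ = b := by
  have ha1 : -1 ≤ a := by nlinarith [sq_nonneg b]
  have ha2 : a ≤ 1 := by nlinarith [sq_nonneg b]
  rcases le_or_gt 0 b with hb | hb
  · refine ⟨Real.arccos a, Real.cos_arccos ha1 ha2, ?_⟩
    rw [Real.sin_arccos]
    rw [show 1 - a ^ 2 = b ^ 2 by linarith, Real.sqrt_sq hb]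
  · refine ⟨-Real.arccos a, by rw [Real.cos_neg]; exact Real.cos_arccos ha1 ha2, ?_⟩
    rw [Real.sin_neg, Real.sin_arccos]
    rw [show 1 - a ^ 2 = b ^ 2 by linarith, Real.sqrt_sq_eq_abs, abs_of_neg hb]
    ring

lemma inv_mul_cancel_left3 {a : Mat2} (ha : a ∈ SU2) (y : Mat2) : a⁻¹ * (a * y) = y := by
  rw [← Matrix.mul_assoc, su2_inv_mul ha, Matrix.one_mul]

lemma mul_inv_cancel_left3 {a : Mat2} (ha : a ∈ SU2) (y : Mat2) : a * (a⁻¹ * y) = y := by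
  rw [← Matrix.mul_assoc, su2_mul_inv ha, Matrix.one_mul]


theorem stmt16 (γ1 γ2 γb1 γb2 : ℝ → R3) (c1 c2 d1 d2 : ℝ → Mat2) (g : Mat2)
    (h : IsAdmissiblePair γ1 γ2) (hb : IsAdmissiblePair γb1 γb2)
    (hc1 : IsLift γ1 c1) (hc2 : IsLift γ2 c2)
    (hd1 : IsLift γb1 d1) (hd2 : IsLift γb2 d2)
    (hg : g ∈ Matrix.specialUnitaryGroup (Fin 2) ℂ)
    (hconj : ∀ s1 s2 : ℝ, fmap d1 d2 s1 s2 = g * fmap c1 c2 s1 s2 * g⁻¹) :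
    ∃ θ : ℝ, (∀ s, 0 < Real.cos θ - kappa γ1 s * Real.sin θ) ∧
      (∀ s, 0 < Real.cos θ - kappa γ2 s * Real.sin θ) ∧
      ∃ α1 α2 : Matrix (Fin 3) (Fin 3) ℝ,
        α1ᵀ * α1 = 1 ∧ α1.det = 1 ∧ α2ᵀ * α2 = 1 ∧ α2.det = 1 ∧
        (∀ s, α1.mulVec (parallelCurve γ1 θ s) = γb1 s) ∧
        ∀ s, α2.mulVec (parallelCurve γ2 θ s) = γb2 s := by
  have hgi : g⁻¹ ∈ SU2 := su2_inv_mem hg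
  -- solve for d1, d2
  have hd1s : ∀ s, d1 s = (d1 0 * g * (c1 0)⁻¹) * c1 s * g⁻¹ := by
    intro s
    have e := hconj s 0
    simp only [fmap] at e
    rw [Matrix.mul_assoc ((d1 0)⁻¹ * d1 s) (d2 0)⁻¹ (d2 0), su2_inv_mul (hd2.mem 0),
      Matrix.mul_one,
      Matrix.mul_assoc ((c1 0)⁻¹ * c1 s) (c2 0)⁻¹ (c2 0), su2_inv_mul (hc2.mem 0),
      Matrix.mul_one] at e
    calc d1 s = d1 0 * ((d1 0)⁻¹ * d1 s) := (mul_inv_cancel_left3 (hd1.mem 0) _).symm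
      _ = d1 0 * (g * ((c1 0)⁻¹ * c1 s) * g⁻¹) := by rw [e]
      _ = (d1 0 * g * (c1 0)⁻¹) * c1 s * g⁻¹ := by simp only [Matrix.mul_assoc]
  have hd2s : ∀ s, d2 s = (d2 0 * g * (c2 0)⁻¹) * c2 s * g⁻¹ := by
    intro s
    have e := hconj 0 s
    simp only [fmap] at e
    rw [su2_inv_mul (hd1.mem 0), Matrix.one_mul,
      su2_inv_mul (hc1.mem 0), Matrix.one_mul] at e
    -- e : (d2 s)⁻¹ * d2 0 = g * ((c2 s)⁻¹ * c2 0) * g⁻¹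
    have eq1 : d2 s * (g * ((c2 s)⁻¹ * c2 0) * g⁻¹) = d2 0 := by
      rw [← e, ← Matrix.mul_assoc, su2_mul_inv (hd2.mem s), Matrix.one_mul]
    have hZ : (g * ((c2 s)⁻¹ * c2 0) * g⁻¹) * (g * ((c2 0)⁻¹ * c2 s) * g⁻¹) = 1 := by
      simp only [Matrix.mul_assoc]
      rw [inv_mul_cancel_left3 hg, mul_inv_cancel_left3 (hc2.mem 0),
        inv_mul_cancel_left3 (hc2.mem s), su2_mul_inv hg]
    calc d2 s = d2 s * ((g * ((c2 s)⁻¹ * c2 0) * g⁻¹) * (g * ((c2 0)⁻¹ * c2 s) * g⁻¹)) := by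
          rw [hZ, Matrix.mul_one]
      _ = (d2 s * (g * ((c2 s)⁻¹ * c2 0) * g⁻¹)) * (g * ((c2 0)⁻¹ * c2 s) * g⁻¹) := by
          simp only [Matrix.mul_assoc]
      _ = d2 0 * (g * ((c2 0)⁻¹ * c2 s) * g⁻¹) := by rw [eq1]
      _ = (d2 0 * g * (c2 0)⁻¹) * c2 s * g⁻¹ := by simp only [Matrix.mul_assoc]
  set D1 : Mat2 := d1 0 * g * (c1 0)⁻¹ with hD1def
  set D2 : Mat2 := d2 0 * g * (c2 0)⁻¹ with hD2def
  have hD1 : D1 ∈ SU2 := su2_mul_mem (su2_mul_mem (hd1.mem 0) hg) (su2_inv_mem (hc1.mem 0))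
  have hD2 : D2 ∈ SU2 := su2_mul_mem (su2_mul_mem (hd2.mem 0) hg) (su2_inv_mem (hc2.mem 0))
  set x : R3 := comp3 (AdM g⁻¹ E3) with hxdef
  set w : R3 := comp3 (AdM g⁻¹ E1) with hwdef
  have hx : toSu2 x = AdM g⁻¹ E3 :=
    toSu2_comp3 (AdM_conjTranspose hgi E3_skew) (by rw [AdM_trace hgi, E3_trace])
  have hw : toSu2 w = AdM g⁻¹ E1 :=
    toSu2_comp3 (AdM_conjTranspose hgi E1_skew) (by rw [AdM_trace hgi, E1_trace])
  have key1 := key_eqs h.reg1 hb.reg1 hc1 hd1 hD1 hgi hd1s x w hx hw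
  have key2 := key_eqs h.reg2 hb.reg2 hc2 hd2 hD2 hgi hd2s x w hx hw
  -- unit norms
  have hwu : w 0 ^ 2 + w 1 ^ 2 + w 2 ^ 2 = 1 := by
    have : dot3 w w = 1 := by
      calc dot3 w w = ip (toSu2 w) (toSu2 w) := (ip_toSu2 w w).symm
        _ = ip E1 E1 := by rw [hw]; exact ip_AdM hgi E1 E1
        _ = 1 := by rw [← toSu2_bas0, ip_toSu2]; simp [dot3, bas3]
    simp only [dot3] at this; nlinarith [this]
  have hxu : x 0 ^ 2 + x 1 ^ 2 + x 2 ^ 2 = 1 := by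
    have : dot3 x x = 1 := by
      calc dot3 x x = ip (toSu2 x) (toSu2 x) := (ip_toSu2 x x).symm
        _ = ip E3 E3 := by rw [hx]; exact ip_AdM hgi E3 E3
        _ = 1 := by rw [← toSu2_bas2, ip_toSu2]; simp [dot3, bas3]
    simp only [dot3] at this; nlinarith [this]
  -- x 0 = 0
  have hx0 : x 0 = 0 := by
    by_contra hne
    have hkw : ∀ (γ γb : ℝ → R3), IsRegularCurve γ → IsRegularCurve γb →
        (norm3 (deriv γb 0) * w 2 = -(x 0) * norm3 (deriv γ 0)) →
        (norm3 (deriv γb 0) * w 1 = x 0 * (kappa γ 0 * norm3 (deriv γ 0))) →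
        kappa γ 0 * w 2 = -(w 1) := by
      intro γ γb hr hrb eA eB
      have hv := rc_v_pos hr 0
      have hN := rc_v_pos hrb 0
      have h3 : x 0 * norm3 (deriv γ 0) * (kappa γ 0 * w 2 + w 1) = 0 := by
        linear_combination w 1 * eA - w 2 * eB
      have h4 : x 0 * norm3 (deriv γ 0) ≠ 0 := mul_ne_zero hne (ne_of_gt hv)
      have h5 : kappa γ 0 * w 2 + w 1 = 0 := by
        rcases mul_eq_zero.mp h3 with h | h
        · exact absurd h h4
        · exact h
      linarith
    have c1e := hkw γ1 γb1 h.reg1 hb.reg1 (key1 0).2.2.1 (key1 0).2.2.2.1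
    have c2e := hkw γ2 γb2 h.reg2 hb.reg2 (key2 0).2.2.1 (key2 0).2.2.2.1
    have hw2 : w 2 ≠ 0 := by
      intro h0
      have eA := (key1 0).2.2.1
      rw [h0, mul_zero] at eA
      have hv := rc_v_pos h.reg1 0
      have : x 0 * norm3 (deriv γ1 0) = 0 := by linarith
      exact mul_ne_zero hne (ne_of_gt hv) this
    have heq : kappa γ1 0 = kappa γ2 0 := mul_right_cancel₀ hw2 (c1e.trans c2e.symm)
    have := h.curv 0 0
    rw [heq] at this
    exact lt_irrefl _ this
  -- w 1 = w 2 = 0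
  have hN10 := rc_v_pos hb.reg1
  have hw1 : w 1 = 0 := by
    have eB := (key1 0).2.2.2.1
    rw [hx0] at eB
    simp at eB
    rcases eB with h0 | h0
    · exact absurd h0 (ne_of_gt (hN10 0))
    · exact h0
  have hw2 : w 2 = 0 := by
    have eA := (key1 0).2.2.1
    rw [hx0] at eA
    simp at eA
    rcases eA with h0 | h0
    · exact absurd h0 (ne_of_gt (hN10 0))
    · exact h0
  have hx12 : x 1 ^ 2 + x 2 ^ 2 = 1 := by rw [hx0] at hxu; simpa using hxu
  obtain ⟨θ, hcos, hsin⟩ := exists_cos_sin (a := x 2) (b := x 1) (by linarith)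
  have hw0 : w 0 = 1 ∨ w 0 = -1 := by
    have hf : (w 0 - 1) * (w 0 + 1) = 0 := by nlinarith
    rcases mul_eq_zero.mp hf with h0 | h0
    · left; linarith
    · right; linarith
  rcases hw0 with hw0 | hw0
  · -- positive case
    refine ⟨θ, ?_, ?_, so3Of D1, so3Of D2, so3Of_orth hD1, so3Of_det hD1,
      so3Of_orth hD2, so3Of_det hD2, ?_, ?_⟩
    · intro s
      have eC := (key1 s).2.2.2.2
      rw [hw0, mul_one] at eC
      have hN := rc_v_pos hb.reg1 s
      have hv := rc_v_pos h.reg1 s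
      rw [hcos, hsin]
      nlinarith
    · intro s
      have eC := (key2 s).2.2.2.2
      rw [hw0, mul_one] at eC
      have hN := rc_v_pos hb.reg2 s
      have hv := rc_v_pos h.reg2 s
      rw [hcos, hsin]
      nlinarith
    · intro s
      have rep := (key1 s).1
      rw [hx0, zero_smul, zero_add] at rep
      rw [rep, parallelCurve, hcos, hsin,
        add_comm (x 2 • γ1 s) (x 1 • unitNormal γ1 s)]
    · intro s
      have rep := (key2 s).1
      rw [hx0, zero_smul, zero_add] at rep
      rw [rep, parallelCurve, hcos, hsin,
        add_comm (x 2 • γ2 s) (x 1 • unitNormal γ2 s)]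
  · -- negative case: contradiction
    exfalso
    have neg_mulVec : ∀ (D : Mat2) (u : R3), D ∈ SU2 →
        (so3Of D).mulVec (-u) = -((so3Of D).mulVec u) := by
      intro D u _
      have := mulVec_smul3 (so3Of D) (-1) u
      simpa using this
    have mkTr : ∀ (γ γb : ℝ → R3) (D : Mat2), D ∈ SU2 →
        (∀ s, uT γb s = (so3Of D).mulVec
          (w 0 • uT γ s + w 1 • unitNormal γ s + w 2 • γ s)) →
        ∀ s, uT γb s = -((so3Of D).mulVec (uT γ s)) := by
      intro γ γb D hD hT s
      have hvec : w 0 • uT γ s + w 1 • unitNormal γ s + w 2 • γ s = -(uT γ s) := by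
        rw [hw0, hw1, hw2]
        funext i; simp
      rw [hT s, hvec, neg_mulVec _ _ hD]
    have hxr1 : ∀ s, γb1 s = (so3Of D1).mulVec (x 1 • unitNormal γ1 s + x 2 • γ1 s) := by
      intro s
      have := (key1 s).1
      rwa [hx0, zero_smul, zero_add] at this
    have hxr2 : ∀ s, γb2 s = (so3Of D2).mulVec (x 1 • unitNormal γ2 s + x 2 • γ2 s) := by
      intro s
      have := (key2 s).1
      rwa [hx0, zero_smul, zero_add] at this
    have hk1 := neg_case_kappa h.reg1 hb.reg1 hD1 hxr1
      (mkTr γ1 γb1 D1 hD1 (fun s => (key1 s).2.1)) 0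
    have hk2 := neg_case_kappa h.reg2 hb.reg2 hD2 hxr2
      (mkTr γ2 γb2 D2 hD2 (fun s => (key2 s).2.1)) 0
    have eC1 := (key1 0).2.2.2.2
    have eC2 := (key2 0).2.2.2.2
    rw [hw0] at eC1 eC2
    have hv1 := rc_v_pos h.reg1 0
    have hv2 := rc_v_pos h.reg2 0
    have hN1 := rc_v_pos hb.reg1 0
    have hN2 := rc_v_pos hb.reg2 0
    set u1 : ℝ := x 2 - kappa γ1 0 * x 1 with hu1def
    set u2 : ℝ := x 2 - kappa γ2 0 * x 1 with hu2def
    have hu1 : u1 < 0 := by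
      have h5 : norm3 (deriv γ1 0) * u1 < 0 := by linarith [eC1, hN1]
      by_contra hcon
      push_neg at hcon
      have h6 := mul_nonneg hv1.le hcon
      linarith
    have hu2 : u2 < 0 := by
      have h5 : norm3 (deriv γ2 0) * u2 < 0 := by linarith [eC2, hN2]
      by_contra hcon
      push_neg at hcon
      have h6 := mul_nonneg hv2.le hcon
      linarith
    have e1 : kappa γb1 0 * u1 = -(x 1 + kappa γ1 0 * x 2) := by
      have hz : norm3 (deriv γ1 0) * (kappa γb1 0 * u1 + (x 1 + kappa γ1 0 * x 2)) = 0 := by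
        linear_combination (-(kappa γb1 0)) * eC1 - hk1
      rcases mul_eq_zero.mp hz with h0 | h0
      · exact absurd h0 (ne_of_gt hv1)
      · linarith
    have e2 : kappa γb2 0 * u2 = -(x 1 + kappa γ2 0 * x 2) := by
      have hz : norm3 (deriv γ2 0) * (kappa γb2 0 * u2 + (x 1 + kappa γ2 0 * x 2)) = 0 := by
        linear_combination (-(kappa γb2 0)) * eC2 - hk2
      rcases mul_eq_zero.mp hz with h0 | h0
      · exact absurd h0 (ne_of_gt hv2)
      · linarith
    have hdiff : (kappa γb1 0 - kappa γb2 0) * (u1 * u2) = -(kappa γ1 0 - kappa γ2 0) := by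
      rw [hu1def, hu2def]
      linear_combination (x 2 - kappa γ2 0 * x 1) * e1 - (x 2 - kappa γ1 0 * x 1) * e2
        - (kappa γ1 0 - kappa γ2 0) * hx12
    have hu12 : 0 < u1 * u2 := mul_pos_of_neg_of_neg hu1 hu2
    have hc := hb.curv 0 0
    have hc' := h.curv 0 0
    have hp := mul_pos (sub_pos.2 hc) hu12
    linarith [hp, hdiff, hc']
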